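/- arXiv:cmp-lg/9603002 — 2 statements merged into one kernel-verified Lean document; each statement's English description precedes it below -/
import Mathlib

section
/- For any context-free grammar G, if a configuration ⟨s,σ,w⟩ of the shift-reduce recognizer R(G) is reachable by a sequence of moves from an initial configuration, then σ ∈ Stacks(s). -/
/-!
Infrastructure for finite-state approximation of context-free grammars
(Pereira & Wright). We use Mathlib's `ContextFreeGrammar`.

A dotted rule `A → α · β` is represented as `(some A, α, β)`;
the auxiliary dotted rules `S' → · S` and `S' → S ·` are represented with
first component `none`.  States of the LR(0) characteristic machine `M(G)`
are sets of dotted rules (the determinization by the subset construction);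
the transition function `next` is total, with the empty set `∅` playing the
role of "undefined", so genuine transitions are those with nonempty target.
-/

namespace LRApprox

universe uN uT

variable {T : Type uT}

/-- Context-free grammar as in the older Mathlib (December 2024), whose type of
nonterminals could live in any universe `uN`. -/
structure ContextFreeGrammar.{uN', uT'} (T : Type uT') where
  /-- Type of nonterminals. -/
  NT : Type uN'
  /-- Initial nonterminal. -/
  initial : NT
  /-- Rewrite rules. -/
  rules : Finset (ContextFreeRule T NT)

/-- A dotted rule `A → α · β`; `none` as first component stands for the
auxiliary start symbol `S'`. -/
abbrev DottedRule (g : ContextFreeGrammar.{uN} T) : Type _ :=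
  Option g.NT × List (Symbol T g.NT) × List (Symbol T g.NT)

/-- A state of the characteristic machine `M(G)`: a set of dotted rules. -/
abbrev LRState (g : ContextFreeGrammar.{uN} T) : Type _ := Set (DottedRule g)

/-- Closure of a set of dotted rules: whenever `A → α · B β` is present and
`B → γ` is a rule, add `B → · γ`. -/
inductive Closure (g : ContextFreeGrammar.{uN} T) (R : Set (DottedRule g)) :
    DottedRule g → Prop
  | base {d : DottedRule g} : d ∈ R → Closure g R d
  | step {A : Option g.NT} {α β : List (Symbol T g.NT)} {B : g.NT}
      (r : ContextFreeRule T g.NT) :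
      Closure g R (A, α, Symbol.nonterminal B :: β) →
      r ∈ g.rules → r.input = B → Closure g R (some B, [], r.output)

/-- The transition function `δ` of `M(G)`: shift the dot over `X` and take the
closure.  The empty set plays the role of "undefined". -/
def next (g : ContextFreeGrammar.{uN} T) (s : LRState g) (X : Symbol T g.NT) : LRState g :=
  {d | Closure g {d' | ∃ A α β, (A, α, X :: β) ∈ s ∧ d' = (A, α ++ [X], β)} d}

/-- The start state `s₀` of `M(G)`: the closure of `{S' → · S}`. -/
def start (g : ContextFreeGrammar.{uN} T) : LRState g :=
  {d | Closure g {(none, [], [Symbol.nonterminal g.initial])} d}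

/-- The dotted rule `S' → S ·`. -/
def finalDR (g : ContextFreeGrammar.{uN} T) : DottedRule g :=
  (none, [Symbol.nonterminal g.initial], [])

/-- A state is final iff it contains `S' → S ·`. -/
def IsFinal (g : ContextFreeGrammar.{uN} T) (s : LRState g) : Prop := finalDR g ∈ s

/-- Iterated transition function, extended to strings of symbols. -/
def nextStar (g : ContextFreeGrammar.{uN} T) (s : LRState g)
    (α : List (Symbol T g.NT)) : LRState g :=
  α.foldl (next g) s

/-- A stack of the shift-reduce recognizer: a sequence of (state, symbol) pairs. -/
abbrev Stack (g : ContextFreeGrammar.{uN} T) : Type _ :=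
  List (LRState g × Symbol T g.NT)

/-- `Stacks g s σ` iff `σ = ⟨q₀,X₀⟩…⟨q_k,X_k⟩` with `q₀ = s₀`,
`q_i = δ(q_{i-1},X_{i-1})` and `s = δ(q_k,X_k)`; in addition `Stacks s₀`
contains the empty sequence. -/
inductive Stacks (g : ContextFreeGrammar.{uN} T) : LRState g → Stack g → Prop
  | nil : Stacks g (start g) []
  | snoc {q : LRState g} {σ : Stack g} {X : Symbol T g.NT} :
      Stacks g q σ → next g q X ≠ ∅ → Stacks g (next g q X) (σ ++ [(q, X)])

/-- A configuration `⟨s, σ, w⟩` of the shift-reduce recognizer `R(G)`. -/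
structure Cfg (g : ContextFreeGrammar.{uN} T) where
  state : LRState g
  stack : Stack g
  input : List T

/-- A shift move of `R(G)`. -/
inductive ShiftStep (g : ContextFreeGrammar.{uN} T) : Cfg g → Cfg g → Prop
  | shift {s : LRState g} {σ : Stack g} {x : T} {w : List T} :
      next g s (Symbol.terminal x) ≠ ∅ →
      ShiftStep g ⟨s, σ, x :: w⟩
        ⟨next g s (Symbol.terminal x), σ ++ [(s, Symbol.terminal x)], w⟩

/-- A reduce move of `R(G)`. -/
inductive ReduceStep (g : ContextFreeGrammar.{uN} T) : Cfg g → Cfg g → Prop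
  | empty {s : LRState g} {σ : Stack g} {w : List T} {A : g.NT} :
      (some A, ([] : List (Symbol T g.NT)), ([] : List (Symbol T g.NT))) ∈ s →
      next g s (Symbol.nonterminal A) ≠ ∅ →
      ReduceStep g ⟨s, σ, w⟩
        ⟨next g s (Symbol.nonterminal A), σ ++ [(s, Symbol.nonterminal A)], w⟩
  | pop {s : LRState g} {σ τ : Stack g} {w : List T} {A : g.NT}
      {s₁ : LRState g} {X₁ : Symbol T g.NT} :
      (some A, ((s₁, X₁) :: τ).map Prod.snd, ([] : List (Symbol T g.NT))) ∈ s →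
      next g s₁ (Symbol.nonterminal A) ≠ ∅ →
      ReduceStep g ⟨s, σ ++ (s₁, X₁) :: τ, w⟩
        ⟨next g s₁ (Symbol.nonterminal A), σ ++ [(s₁, Symbol.nonterminal A)], w⟩

/-- A move of the shift-reduce recognizer `R(G)`. -/
def Step (g : ContextFreeGrammar.{uN} T) (c c' : Cfg g) : Prop :=
  ShiftStep g c c' ∨ ReduceStep g c c'

/-- `R(G)` accepts `w`: some sequence of moves leads from the initial
configuration `⟨s₀, ε, w⟩` to a final configuration `⟨s, ⟨s₀,S⟩, ε⟩`, `s ∈ F`. -/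
def RAccepts (g : ContextFreeGrammar.{uN} T) (w : List T) : Prop :=
  ∃ s : LRState g, IsFinal g s ∧
    Relation.ReflTransGen (Step g) ⟨start g, [], w⟩
      ⟨s, [(start g, Symbol.nonterminal g.initial)], []⟩

/-- A stack congruence on `R(G)`: a family of equivalence relations on
`Stacks(s)`, compatible with pushing. -/
def IsStackCongruence (g : ContextFreeGrammar.{uN} T)
    (E : LRState g → Stack g → Stack g → Prop) : Prop :=
  (∀ s σ σ', E s σ σ' → Stacks g s σ ∧ Stacks g s σ') ∧
  (∀ s σ, Stacks g s σ → E s σ σ) ∧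
  (∀ s σ σ', E s σ σ' → E s σ' σ) ∧
  (∀ s σ₁ σ₂ σ₃, E s σ₁ σ₂ → E s σ₂ σ₃ → E s σ₁ σ₃) ∧
  (∀ s X σ σ', next g s X ≠ ∅ → E s σ σ' →
    E (next g s X) (σ ++ [(s, X)]) (σ' ++ [(s, X)]))

/-- A state of the unfolded recognizer `R_≡`: a state of `M(G)` together with
an equivalence class of stacks (represented as a set of stacks). -/
abbrev UState (g : ContextFreeGrammar.{uN} T) : Type _ := LRState g × Set (Stack g)

/-- Transition function `δ_≡` of the unfolded recognizer:
`δ_≡(⟨s,[σ]⟩, X) = ⟨δ(s,X), [σ⟨s,X⟩]⟩`. -/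
def uNext (g : ContextFreeGrammar.{uN} T) (E : LRState g → Stack g → Stack g → Prop)
    (p : UState g) (X : Symbol T g.NT) : UState g :=
  (next g p.1 X,
   {τ | Stacks g (next g p.1 X) τ ∧ ∃ σ ∈ p.2, E (next g p.1 X) τ (σ ++ [(p.1, X)])})

/-- Start state `⟨s₀, [ε]⟩` of the unfolded recognizer. -/
def uStart (g : ContextFreeGrammar.{uN} T)
    (E : LRState g → Stack g → Stack g → Prop) : UState g :=
  (start g, {τ | Stacks g (start g) τ ∧ E (start g) τ []})

/-- Genuine states of the unfolded recognizer: pairs `⟨s, [σ]_s⟩` with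
`σ ∈ Stacks(s)`. -/
def IsUState (g : ContextFreeGrammar.{uN} T)
    (E : LRState g → Stack g → Stack g → Prop) (p : UState g) : Prop :=
  ∃ σ, Stacks g p.1 σ ∧ p.2 = {τ | Stacks g p.1 τ ∧ E p.1 τ σ}

/-- Iterated `δ_≡`, extended to strings of symbols. -/
def uNextStar (g : ContextFreeGrammar.{uN} T)
    (E : LRState g → Stack g → Stack g → Prop)
    (p : UState g) (α : List (Symbol T g.NT)) : UState g :=
  α.foldl (uNext g E) p

/-- A configuration of the unfolded recognizer `R_≡`. -/
structure UCfg (g : ContextFreeGrammar.{uN} T) where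
  state : UState g
  stack : List (UState g × Symbol T g.NT)
  input : List T

/-- A shift move of the unfolded recognizer. -/
inductive UShiftStep (g : ContextFreeGrammar.{uN} T)
    (E : LRState g → Stack g → Stack g → Prop) : UCfg g → UCfg g → Prop
  | shift {p : UState g} {σ : List (UState g × Symbol T g.NT)} {x : T} {w : List T} :
      next g p.1 (Symbol.terminal x) ≠ ∅ →
      UShiftStep g E ⟨p, σ, x :: w⟩
        ⟨uNext g E p (Symbol.terminal x), σ ++ [(p, Symbol.terminal x)], w⟩

/-- A reduce move of the unfolded recognizer. -/
inductive UReduceStep (g : ContextFreeGrammar.{uN} T)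
    (E : LRState g → Stack g → Stack g → Prop) : UCfg g → UCfg g → Prop
  | empty {p : UState g} {σ : List (UState g × Symbol T g.NT)} {w : List T} {A : g.NT} :
      (some A, ([] : List (Symbol T g.NT)), ([] : List (Symbol T g.NT))) ∈ p.1 →
      next g p.1 (Symbol.nonterminal A) ≠ ∅ →
      UReduceStep g E ⟨p, σ, w⟩
        ⟨uNext g E p (Symbol.nonterminal A), σ ++ [(p, Symbol.nonterminal A)], w⟩
  | pop {p : UState g} {σ τ : List (UState g × Symbol T g.NT)} {w : List T} {A : g.NT}
      {p₁ : UState g} {X₁ : Symbol T g.NT} :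
      (some A, ((p₁, X₁) :: τ).map Prod.snd, ([] : List (Symbol T g.NT))) ∈ p.1 →
      next g p₁.1 (Symbol.nonterminal A) ≠ ∅ →
      UReduceStep g E ⟨p, σ ++ (p₁, X₁) :: τ, w⟩
        ⟨uNext g E p₁ (Symbol.nonterminal A), σ ++ [(p₁, Symbol.nonterminal A)], w⟩

/-- A move of the unfolded recognizer `R_≡`. -/
def UStep (g : ContextFreeGrammar.{uN} T)
    (E : LRState g → Stack g → Stack g → Prop) (c c' : UCfg g) : Prop :=
  UShiftStep g E c c' ∨ UReduceStep g E c c'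

/-- The unfolded recognizer `R_≡` accepts `w`. -/
def UAccepts (g : ContextFreeGrammar.{uN} T)
    (E : LRState g → Stack g → Stack g → Prop) (w : List T) : Prop :=
  ∃ p : UState g, IsFinal g p.1 ∧
    Relation.ReflTransGen (UStep g E) ⟨uStart g E, [], w⟩
      ⟨p, [(uStart g E, Symbol.nonterminal g.initial)], []⟩

/-- `Pop(p)`: the unfolded states reachable from `p` by a reduction. -/
def PopSet (g : ContextFreeGrammar.{uN} T)
    (E : LRState g → Stack g → Stack g → Prop) (p : UState g) : Set (UState g) :=
  {p' | ∃ (A : g.NT) (α : List (Symbol T g.NT)) (p'' : UState g),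
    IsUState g E p'' ∧
    (some A, α, ([] : List (Symbol T g.NT))) ∈ p.1 ∧
    (some A, ([] : List (Symbol T g.NT)), α) ∈ p''.1 ∧
    uNextStar g E p'' α = p ∧
    next g p''.1 (Symbol.nonterminal A) ≠ ∅ ∧
    uNext g E p'' (Symbol.nonterminal A) = p'}

/-- Paths in the flattening `F_≡` of the unfolded recognizer: terminal
transitions follow `δ_≡` and reductions become ε-transitions. -/
inductive FPath (g : ContextFreeGrammar.{uN} T)
    (E : LRState g → Stack g → Stack g → Prop) : UState g → List T → UState g → Prop
  | refl (p : UState g) : FPath g E p [] p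
  | shift {p : UState g} {x : T} {w : List T} {q : UState g} :
      next g p.1 (Symbol.terminal x) ≠ ∅ →
      FPath g E (uNext g E p (Symbol.terminal x)) w q → FPath g E p (x :: w) q
  | eps {p p' : UState g} {w : List T} {q : UState g} :
      p' ∈ PopSet g E p → FPath g E p' w q → FPath g E p w q

/-- The flattening `F_≡` accepts `w`. -/
def FAccepts (g : ContextFreeGrammar.{uN} T)
    (E : LRState g → Stack g → Stack g → Prop) (w : List T) : Prop :=
  ∃ q : UState g, IsFinal g q.1 ∧ FPath g E (uStart g E) w q

/-- A stack `⟨s₁,X₁⟩…⟨s_k,X_k⟩` is a loop if `δ(s_k,X_k) = s₁`. -/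
def IsLoop (g : ContextFreeGrammar.{uN} T) (τ : Stack g) : Prop :=
  ∃ p q : LRState g × Symbol T g.NT,
    τ.head? = some p ∧ τ.getLast? = some q ∧ next g q.1 q.2 = p.1

/-- A loop is minimal if no proper prefix of it is a loop. -/
def IsMinimalLoop (g : ContextFreeGrammar.{uN} T) (τ : Stack g) : Prop :=
  IsLoop g τ ∧ ∀ τ' : Stack g, τ' <+: τ → τ' ≠ τ → ¬ IsLoop g τ'

/-- A stack is collapsible if it contains a loop as a contiguous segment. -/
def Collapsible (g : ContextFreeGrammar.{uN} T) (σ : Stack g) : Prop :=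
  ∃ ρ τ υ : Stack g, σ = ρ ++ τ ++ υ ∧ IsLoop g τ

/-- `σ` immediately collapses to `σ'`: remove the earliest minimal loop. -/
def ImmediatelyCollapses (g : ContextFreeGrammar.{uN} T) (σ σ' : Stack g) : Prop :=
  ∃ ρ τ υ : Stack g, σ = ρ ++ τ ++ υ ∧ σ' = ρ ++ υ ∧ IsMinimalLoop g τ ∧
    ¬ ∃ ρ' τ' υ' : Stack g, σ = ρ' ++ τ' ++ υ' ∧ ρ' <+: ρ ∧ ρ' ≠ ρ ∧ IsLoop g τ'

/-- `σ` collapses to `σ'` by finitely many immediate collapses. -/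
def Collapses (g : ContextFreeGrammar.{uN} T) : Stack g → Stack g → Prop :=
  Relation.ReflTransGen (ImmediatelyCollapses g)

/-- Two stacks are collapsing-equivalent if they collapse to the same
uncollapsible stack. -/
def CollEquiv (g : ContextFreeGrammar.{uN} T) (σ σ' : Stack g) : Prop :=
  ∃ τ : Stack g, ¬ Collapsible g τ ∧ Collapses g σ τ ∧ Collapses g σ' τ

/-- The collapsing congruence: the restriction of collapsing equivalence to
the sets `Stacks(s)`. -/
def CollCong (g : ContextFreeGrammar.{uN} T) (s : LRState g) (σ σ' : Stack g) : Prop :=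
  Stacks g s σ ∧ Stacks g s σ' ∧ CollEquiv g σ σ'

/-- A CFG is left-linear if every rule has the form `A → Bβ` or `A → β`
with `β` a string of terminals. -/
def LeftLinear (g : ContextFreeGrammar.{uN} T) : Prop :=
  ∀ r ∈ g.rules, (∃ β : List T, r.output = β.map Symbol.terminal) ∨
    (∃ (B : g.NT) (β : List T), r.output = Symbol.nonterminal B :: β.map Symbol.terminal)

/-- A CFG is right-linear if every rule has the form `A → βB` or `A → β`
with `β` a string of terminals. -/
def RightLinear (g : ContextFreeGrammar.{uN} T) : Prop :=
  ∀ r ∈ g.rules, (∃ β : List T, r.output = β.map Symbol.terminal) ∨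
    (∃ (B : g.NT) (β : List T), r.output = β.map Symbol.terminal ++ [Symbol.nonterminal B])

/-- Reachable (genuine) states of `M(G)`. -/
def ReachableState (g : ContextFreeGrammar.{uN} T) (s : LRState g) : Prop :=
  s ≠ ∅ ∧ ∃ α : List (Symbol T g.NT), nextStar g (start g) α = s

end LRApprox

open LRApprox

/-! Every move of `R(G)` pushes one pair onto a prefix of the current stack, and `Stacks` is
closed under taking prefixes, so membership in `Stacks` is an invariant of the moves. -/

namespace LRApprox

variable {T : Type*} {g : ContextFreeGrammar T}

theorem Stacks.of_append_singleton {s q : LRState g} {σ : Stack g} {X : Symbol T g.NT}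
    (h : Stacks g s (σ ++ [(q, X)])) : Stacks g q σ := by
  generalize hρ : σ ++ [(q, X)] = ρ at h
  cases h with
  | nil => simp at hρ
  | snoc h _ =>
    obtain ⟨rfl, hqX⟩ := List.append_inj' hρ.symm rfl
    simp only [List.cons.injEq, Prod.mk.injEq] at hqX
    exact hqX.1.1 ▸ h

theorem Stacks.exists_of_append {s : LRState g} {σ τ : Stack g}
    (h : Stacks g s (σ ++ τ)) : ∃ q, Stacks g q σ := by
  induction τ using List.reverseRecOn generalizing s with
  | nil => exact ⟨s, by simpa using h⟩
  | append_singleton τ p ih =>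
    rw [← List.append_assoc] at h
    exact ih h.of_append_singleton

theorem Stacks.of_append_cons {s q : LRState g} {σ τ : Stack g} {X : Symbol T g.NT}
    (h : Stacks g s (σ ++ (q, X) :: τ)) : Stacks g q σ := by
  rw [← List.singleton_append, ← List.append_assoc] at h
  obtain ⟨_, h⟩ := h.exists_of_append
  exact h.of_append_singleton

theorem Stacks.of_step {c c' : Cfg g} (h : Stacks g c.state c.stack) (hstep : Step g c c') :
    Stacks g c'.state c'.stack := by
  rcases hstep with hshift | hreduce
  · cases hshift with
    | shift hne => exact h.snoc hne
  · cases hreduce with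
    | empty _ hne => exact h.snoc hne
    | pop _ hne => exact h.of_append_cons.snoc hne

end LRApprox

/-- If a configuration `⟨s, σ, w⟩` of the shift-reduce
recognizer `R(G)` is reachable by a sequence of moves from an initial
configuration, then `σ ∈ Stacks(s)`. -/
theorem stack_of_reachable_configuration {T : Type*} (g : LRApprox.ContextFreeGrammar T) :
    ∀ (w : List T) (c : Cfg g),
      Relation.ReflTransGen (Step g) ⟨start g, [], w⟩ c →
      Stacks g c.state c.stack := by
  intro w c h
  induction h with
  | refl => exact Stacks.nil
  | tail _ hstep ih => exact ih.of_step hstep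
end

section
/- For any context-free grammar G, there are only finitely many uncollapsible stacks over the state set of M(G); consequently, the collapsing equivalence has finitely many equivalence classes and the recognizer unfolded by the collapsing congruence has finitely many states. -/
/-!
Every state of `M(G)` reached along a stack is a set of dotted rules of `G`, so only finitely
many states and stack entries occur. Consecutive entries of a possible stack are linked by `δ`;
if such a stack repeated a state, the segment between the two occurrences would be a loop.
Hence uncollapsible possible stacks have pairwise distinct entries drawn from a finite set, and
there are finitely many of them. Removing the earliest minimal loop is a deterministic,
length-decreasing step that keeps stacks linked, so each stack collapses to a unique
uncollapsible normal form; collapsing-equivalence classes, and states of the unfolded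
recognizer, are then determined by a normal form (and a state of `M(G)`).
-/

theorem Set.Finite.setOf_nodup {α : Type*} {s : Set α} (hs : s.Finite) :
    {l : List α | l.Nodup ∧ ∀ x ∈ l, x ∈ s}.Finite := by
  have := hs.to_subtype
  have := Fintype.ofFinite s
  refine ((List.finite_length_le s (Fintype.card s)).image (List.map Subtype.val)).subset ?_
  rintro l ⟨hnd, hl⟩
  lift l to List s using hl
  exact ⟨l, (hnd.of_map _).length_le_card, rfl⟩

theorem List.finite_setOf_append_eq {α : Type*} (l : List α) :
    {p : List α × List α | p.1 ++ p.2 = l}.Finite := by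
  refine ((Set.finite_Iic l.length).image fun n => (l.take n, l.drop n)).subset ?_
  rintro ⟨α, β⟩ rfl
  exact ⟨α.length, by simp, by simp⟩

theorem List.IsPrefix.length_lt_of_ne {α : Type*} {l₁ l₂ : List α} (h : l₁ <+: l₂)
    (hne : l₁ ≠ l₂) : l₁.length < l₂.length :=
  lt_of_le_of_ne h.length_le fun hl => hne (h.eq_of_length hl)

theorem List.exists_minimal_prefix {α : Type*} {P : List α → Prop} {l : List α} (h : P l) :
    ∃ l', l' <+: l ∧ P l' ∧ ∀ l'', l'' <+: l' → l'' ≠ l' → ¬ P l'' := by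
  obtain ⟨m, ⟨hml, hm⟩, hmin⟩ :=
    (measure List.length).wf.has_min {l' | l' <+: l ∧ P l'} ⟨l, List.prefix_refl l, h⟩
  exact ⟨m, hml, hm, fun l'' hp hne hP => hmin l'' ⟨hp.trans hml, hP⟩ (hp.length_lt_of_ne hne)⟩

theorem List.eq_of_minimal_prefixes {α : Type*} {P : List α → Prop} {l l₁ l₂ : List α}
    (h₁ : l₁ <+: l) (h₂ : l₂ <+: l) (hP₁ : P l₁) (hP₂ : P l₂)
    (hmin₁ : ∀ l', l' <+: l₁ → l' ≠ l₁ → ¬ P l') (hmin₂ : ∀ l', l' <+: l₂ → l' ≠ l₂ → ¬ P l') :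
    l₁ = l₂ := by
  by_contra hne
  rcases List.prefix_or_prefix_of_prefix h₁ h₂ with h | h
  · exact hmin₂ l₁ h hne hP₁
  · exact hmin₁ l₂ h (Ne.symm hne) hP₂

namespace LRApprox

variable {T : Type*} {g : LRApprox.ContextFreeGrammar T}

def dottedRules (g : LRApprox.ContextFreeGrammar T) : Set (DottedRule g) :=
  Prod.mk none '' {p | p.1 ++ p.2 = [Symbol.nonterminal g.initial]} ∪
    ⋃ r ∈ g.rules, Prod.mk (some r.input) '' {p | p.1 ++ p.2 = r.output}

theorem finite_dottedRules (g : LRApprox.ContextFreeGrammar T) : (dottedRules g).Finite :=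
  ((List.finite_setOf_append_eq _).image _).union <|
    g.rules.finite_toSet.biUnion fun _ _ => (List.finite_setOf_append_eq _).image _

theorem shift_mem_dottedRules {A : Option g.NT} {α β : List (Symbol T g.NT)}
    {X : Symbol T g.NT} (h : (A, α, X :: β) ∈ dottedRules g) :
    (A, α ++ [X], β) ∈ dottedRules g := by
  simpa [dottedRules] using h

theorem Closure.mem_dottedRules {R : Set (DottedRule g)} (hR : R ⊆ dottedRules g)
    {d : DottedRule g} (h : Closure g R d) : d ∈ dottedRules g := by
  induction h with
  | base hd => exact hR hd
  | @step _ _ _ _ r _ hr hB => exact Or.inr (Set.mem_biUnion hr ⟨([], r.output), rfl, by rw [hB]⟩)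

theorem Closure.nonempty {R : Set (DottedRule g)} {d : DottedRule g} (h : Closure g R d) :
    R.Nonempty := by
  induction h with
  | base hd => exact ⟨_, hd⟩
  | step _ _ _ _ ih => exact ih

theorem start_subset_dottedRules : start g ⊆ dottedRules g :=
  fun _ hd => hd.mem_dottedRules (by simp [dottedRules])

theorem next_subset_dottedRules {s : LRState g} (hs : s ⊆ dottedRules g) (X : Symbol T g.NT) :
    next g s X ⊆ dottedRules g := by
  refine fun _ hd => Closure.mem_dottedRules ?_ hd
  rintro _ ⟨A, α, β, h, rfl⟩
  exact shift_mem_dottedRules (hs h)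

theorem exists_mem_of_next_ne_empty {s : LRState g} {X : Symbol T g.NT}
    (h : next g s X ≠ ∅) : ∃ A α β, (A, α, X :: β) ∈ s := by
  obtain ⟨d, hd⟩ := Set.nonempty_iff_ne_empty.2 h
  obtain ⟨_, A, α, β, hm, -⟩ := Closure.nonempty hd
  exact ⟨A, α, β, hm⟩

theorem Stacks.subset_dottedRules {s : LRState g} {σ : Stack g} (h : Stacks g s σ) :
    s ⊆ dottedRules g := by
  induction h with
  | nil => exact start_subset_dottedRules
  | snoc _ _ ih => exact next_subset_dottedRules ih _

def stackEntries (g : LRApprox.ContextFreeGrammar T) : Set (LRState g × Symbol T g.NT) :=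
  {e | e.1 ⊆ dottedRules g ∧ next g e.1 e.2 ≠ ∅}

theorem finite_stackEntries (g : LRApprox.ContextFreeGrammar T) : (stackEntries g).Finite := by
  have hD := finite_dottedRules g
  refine (hD.finite_subsets.prod (hD.biUnion fun d _ => d.2.2.finite_toSet)).subset ?_
  rintro ⟨q, X⟩ ⟨hq, hne⟩
  obtain ⟨A, α, β, hm⟩ := exists_mem_of_next_ne_empty hne
  exact ⟨hq, Set.mem_biUnion (hq hm) List.mem_cons_self⟩

def Follows (g : LRApprox.ContextFreeGrammar T) (a b : LRState g × Symbol T g.NT) : Prop :=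
  next g a.1 a.2 = b.1

def IsWellFormed (g : LRApprox.ContextFreeGrammar T) (σ : Stack g) : Prop :=
  σ.IsChain (Follows g) ∧ ∀ e ∈ σ, e ∈ stackEntries g

theorem Stacks.isChain_follows {s : LRState g} {σ : Stack g} (h : Stacks g s σ) :
    σ.IsChain (Follows g) ∧ ∀ e ∈ σ.getLast?, next g e.1 e.2 = s := by
  induction h with
  | nil => simp
  | snoc _ _ ih =>
    refine ⟨List.isChain_append.2 ⟨ih.1, List.isChain_singleton _, ?_⟩, by simp⟩
    simpa [Follows] using ih.2

theorem Stacks.isWellFormed {s : LRState g} {σ : Stack g} (h : Stacks g s σ) :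
    IsWellFormed g σ := by
  refine ⟨h.isChain_follows.1, ?_⟩
  induction h with
  | nil => simp
  | snoc hσ hne ih =>
    simp only [List.mem_append, List.mem_singleton]
    rintro e (he | rfl)
    exacts [ih e he, ⟨hσ.subset_dottedRules, hne⟩]

theorem Collapsible.cons {σ : Stack g} (h : Collapsible g σ) (a : LRState g × Symbol T g.NT) :
    Collapsible g (a :: σ) := by
  obtain ⟨ρ, τ, υ, rfl, hτ⟩ := h
  exact ⟨a :: ρ, τ, υ, rfl, hτ⟩

theorem nodup_map_fst_of_not_collapsible :
    ∀ {σ : Stack g}, σ.IsChain (Follows g) → ¬ Collapsible g σ → (σ.map Prod.fst).Nodup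
  | [], _, _ => List.nodup_nil
  | a :: σ, hc, hu => by
    rw [List.map_cons, List.nodup_cons]
    refine ⟨fun ha => hu ?_, nodup_map_fst_of_not_collapsible hc.tail fun h => hu (h.cons a)⟩
    obtain ⟨b, hb, hab⟩ := List.mem_map.1 ha
    obtain ⟨μ, υ, rfl⟩ := List.append_of_mem hb
    have hc' : ((a :: μ) ++ b :: υ).IsChain (Follows g) := hc
    obtain ⟨-, -, hlink⟩ := List.isChain_append.1 hc'
    refine ⟨[], a :: μ, b :: υ, rfl, a, (a :: μ).getLast (List.cons_ne_nil _ _), rfl,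
      List.getLast?_eq_some_getLast _, ?_⟩
    rw [← hab]
    exact hlink _ (List.getLast?_eq_some_getLast _) b rfl

theorem finite_isWellFormed_not_collapsible (g : LRApprox.ContextFreeGrammar T) :
    {σ : Stack g | IsWellFormed g σ ∧ ¬ Collapsible g σ}.Finite :=
  (finite_stackEntries g).setOf_nodup.subset fun _ ⟨⟨hc, he⟩, hu⟩ =>
    ⟨(nodup_map_fst_of_not_collapsible hc hu).of_map _, he⟩

theorem IsLoop.isChain_append_of_isChain_append {ρ τ υ : Stack g} (hτ : IsLoop g τ)
    (h : (ρ ++ τ ++ υ).IsChain (Follows g)) : (ρ ++ υ).IsChain (Follows g) := by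
  obtain ⟨p, q, hp, hq, hqp⟩ := hτ
  rw [List.append_assoc, List.isChain_append, List.isChain_append] at h
  obtain ⟨hρ, ⟨-, hυ, hτυ⟩, hρτ⟩ := h
  refine List.isChain_append.2 ⟨hρ, hυ, fun x hx y hy => ?_⟩
  have hxp : next g x.1 x.2 = p.1 := hρτ x hx p (by simp [List.head?_append, hp])
  have hqy : next g q.1 q.2 = y.1 := hτυ q (by simp [hq]) y hy
  exact hxp.trans (hqp.symm.trans hqy)

theorem ImmediatelyCollapses.collapsible {σ σ' : Stack g} (h : ImmediatelyCollapses g σ σ') :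
    Collapsible g σ := by
  obtain ⟨ρ, τ, υ, rfl, -, hτ, -⟩ := h
  exact ⟨ρ, τ, υ, rfl, hτ.1⟩

theorem ImmediatelyCollapses.length_lt {σ σ' : Stack g} (h : ImmediatelyCollapses g σ σ') :
    σ'.length < σ.length := by
  obtain ⟨ρ, τ, υ, rfl, rfl, ⟨⟨p, -, hp, -⟩, -⟩, -⟩ := h
  have : 0 < τ.length := List.length_pos_iff.2 (by rintro rfl; simp at hp)
  simp only [List.length_append]
  omega

theorem ImmediatelyCollapses.isWellFormed {σ σ' : Stack g} (h : ImmediatelyCollapses g σ σ')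
    (hσ : IsWellFormed g σ) : IsWellFormed g σ' := by
  obtain ⟨ρ, τ, υ, rfl, rfl, hτ, -⟩ := h
  refine ⟨hτ.1.isChain_append_of_isChain_append hσ.1, fun e he => hσ.2 e ?_⟩
  simp only [List.mem_append] at he ⊢
  tauto

theorem Collapses.isWellFormed {σ σ' : Stack g} (h : Collapses g σ σ')
    (hσ : IsWellFormed g σ) : IsWellFormed g σ' := by
  induction h with
  | refl => exact hσ
  | tail _ hstep ih => exact hstep.isWellFormed ih

theorem Collapsible.exists_immediatelyCollapses {σ : Stack g} (h : Collapsible g σ) :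
    ∃ σ', ImmediatelyCollapses g σ σ' := by
  obtain ⟨ρ₀, τ₀, υ₀, h₀, hτ₀⟩ := h
  obtain ⟨ρ, -, ⟨τ₁, υ, rfl, hτ₁⟩, hρ⟩ :=
    List.exists_minimal_prefix (P := fun ρ => ∃ τ υ, σ = ρ ++ τ ++ υ ∧ IsLoop g τ)
      ⟨τ₀, υ₀, h₀, hτ₀⟩
  obtain ⟨τ, ⟨w, rfl⟩, hτ, hτmin⟩ := List.exists_minimal_prefix hτ₁
  refine ⟨ρ ++ (w ++ υ), ρ, τ, w ++ υ, by simp, rfl, ⟨hτ, hτmin⟩, ?_⟩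
  rintro ⟨ρ', τ', υ', h', hp, hne, hτ'⟩
  exact hρ ρ' hp hne ⟨τ', υ', h', hτ'⟩

theorem rightUnique_immediatelyCollapses : Relator.RightUnique (ImmediatelyCollapses g) := by
  rintro σ _ _ ⟨ρ₁, τ₁, υ₁, rfl, rfl, hτ₁, hρ₁⟩ ⟨ρ₂, τ₂, υ₂, h, rfl, hτ₂, hρ₂⟩
  obtain rfl : ρ₁ = ρ₂ :=
    List.eq_of_minimal_prefixes
      (P := fun ρ => ∃ τ υ, ρ₁ ++ τ₁ ++ υ₁ = ρ ++ τ ++ υ ∧ IsLoop g τ)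
      (l := ρ₁ ++ τ₁ ++ υ₁) ⟨τ₁ ++ υ₁, (List.append_assoc _ _ _).symm⟩
      ⟨τ₂ ++ υ₂, by rw [h, List.append_assoc]⟩ ⟨τ₁, υ₁, rfl, hτ₁.1⟩ ⟨τ₂, υ₂, h, hτ₂.1⟩
      (fun ρ hp hne ⟨τ, υ, h', hτ⟩ => hρ₁ ⟨ρ, τ, υ, h', hp, hne, hτ⟩)
      (fun ρ hp hne ⟨τ, υ, h', hτ⟩ => hρ₂ ⟨ρ, τ, υ, h ▸ h', hp, hne, hτ⟩)
  have h' : τ₁ ++ υ₁ = τ₂ ++ υ₂ := by simpa using h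
  obtain rfl : τ₁ = τ₂ :=
    List.eq_of_minimal_prefixes ⟨υ₁, rfl⟩ ⟨υ₂, h'.symm⟩ hτ₁.1 hτ₂.1 hτ₁.2 hτ₂.2
  rw [List.append_cancel_left h']

theorem Collapses.eq_of_not_collapsible {σ τ : Stack g} (h : Collapses g σ τ)
    (hσ : ¬ Collapsible g σ) : τ = σ := by
  rcases h.cases_head with h | ⟨_, hstep, -⟩
  · exact h.symm
  · exact absurd hstep.collapsible hσ

theorem Collapses.unique {σ τ₁ τ₂ : Stack g} (h₁ : Collapses g σ τ₁) (h₂ : Collapses g σ τ₂)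
    (hτ₁ : ¬ Collapsible g τ₁) (hτ₂ : ¬ Collapsible g τ₂) : τ₁ = τ₂ := by
  rcases h₁.total_of_right_unique rightUnique_immediatelyCollapses h₂ with h | h
  · exact (Collapses.eq_of_not_collapsible h hτ₁).symm
  · exact Collapses.eq_of_not_collapsible h hτ₂

theorem exists_collapses_not_collapsible (σ : Stack g) :
    ∃ τ, Collapses g σ τ ∧ ¬ Collapsible g τ := by
  by_cases hσ : Collapsible g σ
  · obtain ⟨σ', hσ'⟩ := hσ.exists_immediatelyCollapses
    have := hσ'.length_lt
    obtain ⟨τ, hτ, hu⟩ := exists_collapses_not_collapsible σ'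
    exact ⟨τ, .head hσ' hτ, hu⟩
  · exact ⟨σ, .refl, hσ⟩
termination_by σ.length

noncomputable def normalForm (σ : Stack g) : Stack g :=
  (exists_collapses_not_collapsible σ).choose

theorem collapses_normalForm (σ : Stack g) : Collapses g σ (normalForm σ) :=
  (exists_collapses_not_collapsible σ).choose_spec.1

theorem not_collapsible_normalForm (σ : Stack g) : ¬ Collapsible g (normalForm σ) :=
  (exists_collapses_not_collapsible σ).choose_spec.2

theorem collEquiv_iff_normalForm_eq {σ σ' : Stack g} :
    CollEquiv g σ σ' ↔ normalForm σ = normalForm σ' := by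
  constructor
  · rintro ⟨τ, hτ, h, h'⟩
    rw [(collapses_normalForm σ).unique h (not_collapsible_normalForm σ) hτ,
      (collapses_normalForm σ').unique h' (not_collapsible_normalForm σ') hτ]
  · intro h
    exact ⟨normalForm σ, not_collapsible_normalForm σ, collapses_normalForm σ,
      h ▸ collapses_normalForm σ'⟩

theorem Stacks.isWellFormed_normalForm {s : LRState g} {σ : Stack g} (h : Stacks g s σ) :
    IsWellFormed g (normalForm σ) :=
  (collapses_normalForm σ).isWellFormed h.isWellFormed

end LRApprox

open LRApprox

/-- There are only finitely many uncollapsible possible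
stacks; consequently, the collapsing equivalence has finitely many classes on
the possible stacks, and the recognizer unfolded by the collapsing congruence
has finitely many states. -/
theorem finitely_many_uncollapsible_stacks {T : Type*} (g : LRApprox.ContextFreeGrammar T) :
    {σ : Stack g | (∃ s : LRState g, Stacks g s σ) ∧ ¬ Collapsible g σ}.Finite ∧
    {C : Set (Stack g) | ∃ σ : Stack g, (∃ s : LRState g, Stacks g s σ) ∧
        C = {σ' : Stack g | CollEquiv g σ σ'}}.Finite ∧
    {p : UState g | IsUState g (CollCong g) p}.Finite := by
  have hW := finite_isWellFormed_not_collapsible g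
  refine ⟨hW.subset ?_, (hW.image fun τ => {σ' | τ = normalForm σ'}).subset ?_,
    (((finite_dottedRules g).finite_subsets.prod hW).image
      fun x => (x.1, {σ' | Stacks g x.1 σ' ∧ x.2 = normalForm σ'})).subset ?_⟩
  · rintro σ ⟨⟨s, hs⟩, hσ⟩
    exact ⟨hs.isWellFormed, hσ⟩
  · rintro C ⟨σ, ⟨s, hs⟩, rfl⟩
    exact ⟨normalForm σ, ⟨hs.isWellFormed_normalForm, not_collapsible_normalForm σ⟩,
      by simp only [collEquiv_iff_normalForm_eq]⟩
  · rintro ⟨s, C⟩ ⟨σ, hσ, hC⟩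
    dsimp only at hσ hC
    subst hC
    refine ⟨(s, normalForm σ), ⟨hσ.subset_dottedRules, hσ.isWellFormed_normalForm,
      not_collapsible_normalForm σ⟩, Prod.ext rfl ?_⟩
    ext τ
    simp [CollCong, collEquiv_iff_normalForm_eq, hσ, eq_comm]
end
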